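/- In sl(3), the 4-dimensional subalgebra g_{JE} spanned by {H^P, H₁₃^⊥, E₁₂, E₁₃} is a Frobenius Lie algebra: for nonzero scalars a, b, the functional f = a E₁₂* + b E₁₃* yields a nondegenerate form (x,y) ↦ f([x,y]) on g_{JE}. -/

import Mathlib

/- Pair x ∈ g_JE against the four generators. H^P and H₁₃^⊥ are diagonal, so bracketing with them
only rescales the entries of x, and the pairings give a x₀₁ + b x₀₂ = 0 and a x₀₁ = 0. Pairing with
E₁₂ and E₁₃ gives a (x₀₀ - x₁₁) = 0 and b (x₀₀ - x₂₂) = 0, so the diagonal of x is scalar, hence zero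
because x is traceless; the remaining entries vanish on all of g_JE. -/

open Matrix

noncomputable section

variable (K : Type) [Field K] [CharZero K]

def Esl3 (i j : Fin 3) : Matrix (Fin 3) (Fin 3) K := single i j 1

def HPsl3 : Matrix (Fin 3) (Fin 3) K :=
  (3 : K)⁻¹ • ((2 : K) • Esl3 K 0 0 - Esl3 K 1 1 - Esl3 K 2 2)

def H13perp : Matrix (Fin 3) (Fin 3) K :=
  (3 : K)⁻¹ • (Esl3 K 0 0 - (2 : K) • Esl3 K 1 1 + Esl3 K 2 2)

def gJE : Submodule K (Matrix (Fin 3) (Fin 3) K) :=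
  Submodule.span K {HPsl3 K, H13perp K, Esl3 K 0 1, Esl3 K 0 2}

end

namespace Matrix

variable {n R : Type*} [Fintype n] [DecidableEq n]

theorem lie_single_apply_same [Ring R] (x : Matrix n n R) (i j : n) (c : R) :
    ⁅x, single i j c⁆ i j = x i i * c - c * x j j := by
  simp [Ring.lie_def]

theorem lie_single_apply_of_ne [Ring R] (x : Matrix n n R) {i j l : n} (c : R) (hl : l ≠ j) :
    ⁅x, single i j c⁆ i l = -(c * x j l) := by
  simp [Ring.lie_def, hl]

theorem lie_diagonal_apply [CommRing R] (x : Matrix n n R) (d : n → R) (i j : n) :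
    ⁅x, diagonal d⁆ i j = (d j - d i) * x i j := by
  simp only [Ring.lie_def, sub_apply, mul_diagonal, diagonal_mul]
  ring

end Matrix

section

variable {K : Type} [Field K]

theorem HPsl3_eq_diagonal : HPsl3 K = diagonal ![2 / 3, -1 / 3, -1 / 3] := by
  ext i j
  fin_cases i <;> fin_cases j <;> simp [HPsl3, Esl3, diagonal, div_eq_inv_mul]

theorem H13perp_eq_diagonal : H13perp K = diagonal ![1 / 3, -2 / 3, 1 / 3] := by
  ext i j
  fin_cases i <;> fin_cases j <;> simp [H13perp, Esl3, diagonal, div_eq_inv_mul]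

theorem lie_HPsl3_apply_zero [CharZero K] (x : Matrix (Fin 3) (Fin 3) K) {j : Fin 3}
    (hj : j ≠ 0) : ⁅x, HPsl3 K⁆ 0 j = -x 0 j := by
  rw [HPsl3_eq_diagonal, lie_diagonal_apply]
  fin_cases j
  · contradiction
  all_goals norm_num [cons_val_two]

theorem lie_H13perp_apply_zero_one [CharZero K] (x : Matrix (Fin 3) (Fin 3) K) :
    ⁅x, H13perp K⁆ 0 1 = -x 0 1 := by
  rw [H13perp_eq_diagonal, lie_diagonal_apply]
  norm_num

theorem lie_H13perp_apply_zero_two (x : Matrix (Fin 3) (Fin 3) K) :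
    ⁅x, H13perp K⁆ 0 2 = 0 := by
  rw [H13perp_eq_diagonal, lie_diagonal_apply]
  norm_num [cons_val_two]

theorem entries_of_mem_gJE {x : Matrix (Fin 3) (Fin 3) K} (hx : x ∈ gJE K) :
    x 1 0 = 0 ∧ x 1 2 = 0 ∧ x 2 0 = 0 ∧ x 2 1 = 0 ∧ x 0 0 + x 1 1 + x 2 2 = 0 := by
  induction hx using Submodule.span_induction with
  | mem y hy =>
    rcases hy with rfl | rfl | rfl | rfl <;>
      simp [HPsl3_eq_diagonal, H13perp_eq_diagonal, Esl3] <;> ring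
  | zero => simp
  | add y z _ _ hy hz =>
    simp only [Matrix.add_apply, hy, hz, add_zero, true_and]
    linear_combination hy.2.2.2.2 + hz.2.2.2.2
  | smul c y _ hy =>
    simp only [Matrix.smul_apply, smul_eq_mul, hy, mul_zero, true_and]
    linear_combination c * hy.2.2.2.2

end

section

variable (K : Type) [Field K] [CharZero K]

-- Since H^P and H₁₃^⊥ are diagonal, the E₁₂*- and E₁₃*-coordinates of z ∈ g_JE are the entries
-- z 0 1 and z 0 2, so the functional a E₁₂* + b E₁₃* reads a * z 0 1 + b * z 0 2.
theorem stmt16 (a b : K) (ha : a ≠ 0) (hb : b ≠ 0) :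
    ∀ x ∈ gJE K, (∀ y ∈ gJE K, a * ⁅x, y⁆ 0 1 + b * ⁅x, y⁆ 0 2 = 0) → x = 0 := by
  intro x hx hform
  obtain ⟨h10, h12, h20, h21, htr⟩ := entries_of_mem_gJE hx
  have hHP := hform (HPsl3 K) (Submodule.subset_span (by simp))
  have hH13 := hform (H13perp K) (Submodule.subset_span (by simp))
  have hE01 := hform (Esl3 K 0 1) (Submodule.subset_span (by simp))
  have hE02 := hform (Esl3 K 0 2) (Submodule.subset_span (by simp))
  rw [lie_HPsl3_apply_zero x one_ne_zero, lie_HPsl3_apply_zero x (by decide)] at hHP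
  rw [lie_H13perp_apply_zero_one, lie_H13perp_apply_zero_two] at hH13
  rw [Esl3, lie_single_apply_same, lie_single_apply_of_ne _ _ (by decide), h12] at hE01
  rw [Esl3, lie_single_apply_same, lie_single_apply_of_ne _ _ (by decide), h21] at hE02
  have h01 : x 0 1 = 0 := by simpa [ha] using hH13
  have h02 : x 0 2 = 0 := by simpa [h01, hb] using hHP
  have h11 : x 0 0 = x 1 1 := by simpa [ha, sub_eq_zero] using hE01
  have h22 : x 0 0 = x 2 2 := by simpa [hb, sub_eq_zero] using hE02
  have h00 : x 0 0 = 0 := by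
    have : 3 * x 0 0 = 0 := by linear_combination htr + h11 + h22
    simpa using this
  ext i j
  fin_cases i <;> fin_cases j <;> simp [h10, h12, h20, h21, h01, h02, ← h11, ← h22, h00]

end
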